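/- arXiv:1501.04867 — 4 statements merged into one kernel-verified Lean document; each statement's English description precedes it below -/
import Mathlib

section
/- Let A, B, X, Y be jointly distributed random variables with finite ranges. If I(X:Y) = 0 and I(X:Y | A) = 0, then I(A:B) ≤ I(A:B | X) + I(A:B | Y). -/
/-!
Put `F(a,b) = ∑ₓ P(x|a) P(b|x)` and `G(a,b) = ∑_y P(a|y) P(y|b)`. Marginalising `x` (resp. `y`)
with the log-sum inequality gives `D(P_AB ‖ F) ≤ I(A:B|X) - H(A)` and
`D(P_AB ‖ G) ≤ I(A:B|Y) - H(B)`. The two hypotheses give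
`∑ₐ P(a,x) P(a,y) / P(a) = P(x,y) = P(x) P(y)`, which makes `F · G` a probability distribution on
pairs `(a,b)`; Gibbs' inequality for it reads `D(P_AB ‖ F) + D(P_AB ‖ G) ≥ -H(A,B)`, and adding
everything up gives `I(A:B) ≤ I(A:B|X) + I(A:B|Y)`.
-/

open Finset

noncomputable section

/-- Probability of an event under a distribution on a finite sample space. -/
def pr {Ω : Type*} [Fintype Ω] (p : Ω → ℝ) (E : Set Ω) : ℝ :=
  ∑ ω, E.indicator p ω

/-- `p` is a probability mass function on the finite sample space `Ω`. -/
def IsPMF {Ω : Type*} [Fintype Ω] (p : Ω → ℝ) : Prop :=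
  (∀ ω, 0 ≤ p ω) ∧ ∑ ω, p ω = 1

/-- Shannon entropy (base 2) of a random variable `V` on a finite sample space. -/
def ent {Ω β : Type*} [Fintype Ω] [Fintype β] (p : Ω → ℝ) (V : Ω → β) : ℝ :=
  -∑ v, pr p {ω | V ω = v} * Real.logb 2 (pr p {ω | V ω = v})

/-- Conditional Shannon entropy (base 2): `H(V | W)`. -/
def condEnt {Ω β γ : Type*} [Fintype Ω] [Fintype β] [Fintype γ]
    (p : Ω → ℝ) (V : Ω → β) (W : Ω → γ) : ℝ :=
  ent p (fun ω => (V ω, W ω)) - ent p W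

/-- Mutual information (base 2): `I(V : W)`. -/
def mi {Ω β γ : Type*} [Fintype Ω] [Fintype β] [Fintype γ]
    (p : Ω → ℝ) (V : Ω → β) (W : Ω → γ) : ℝ :=
  ent p V + ent p W - ent p (fun ω => (V ω, W ω))

/-- Conditional mutual information (base 2): `I(V : W | U)`. -/
def cmi {Ω β γ δ : Type*} [Fintype Ω] [Fintype β] [Fintype γ] [Fintype δ]
    (p : Ω → ℝ) (V : Ω → β) (W : Ω → γ) (U : Ω → δ) : ℝ :=
  ent p (fun ω => (V ω, U ω)) + ent p (fun ω => (W ω, U ω))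
    - ent p (fun ω => (V ω, W ω, U ω)) - ent p U

end

open Real InformationTheory

lemma mul_div_mul_left_of_eq_zero_imp {c d e : ℝ} (h : c = 0 → d = 0) :
    c * (d / (c * e)) = d / e := by
  rcases eq_or_ne c 0 with hc | hc
  · simp [hc, h hc]
  · rw [mul_div_assoc', mul_div_mul_left d e hc]

lemma sum_sum_mul_div_eq {ι κ : Type*} [Fintype ι] [Fintype κ] {a : ι → ℝ} {b : κ → ℝ} {c : ℝ}
    (ha : ∑ i, a i = c) (hb : ∑ k, b k = c) : ∑ i, ∑ k, a i * b k / c = c := by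
  simp only [← sum_div, ← Fintype.sum_mul_sum, ha, hb, mul_self_div_self]

/-- Relative entropy `D(u ‖ v)` in bits. As `logb 2 0 = 0`, this is the true divergence only when
`u i ≠ 0 → v i ≠ 0`, hence that hypothesis throughout. -/
noncomputable def relEnt {ι : Type*} [Fintype ι] (u v : ι → ℝ) : ℝ :=
  ∑ i, u i * (logb 2 (u i) - logb 2 (v i))

section RelEnt

variable {ι : Type*} [Fintype ι] {u v q r : ι → ℝ}

lemma relEnt_eq_sub (u v : ι → ℝ) :
    relEnt u v = ∑ i, u i * logb 2 (u i) - ∑ i, u i * logb 2 (v i) := by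
  simp only [relEnt, mul_sub, sum_sub_distrib]

lemma sum_mul_logb_mul (h : ∀ i, u i ≠ 0 → q i ≠ 0 ∧ r i ≠ 0) :
    ∑ i, u i * logb 2 (q i * r i) = ∑ i, u i * logb 2 (q i) + ∑ i, u i * logb 2 (r i) := by
  rw [← sum_add_distrib]
  refine sum_congr rfl fun i _ => ?_
  rcases eq_or_ne (u i) 0 with hu | hu
  · simp [hu]
  · rw [logb_mul (h i hu).1 (h i hu).2, mul_add]

lemma sum_mul_logb_div (h : ∀ i, u i ≠ 0 → q i ≠ 0 ∧ r i ≠ 0) :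
    ∑ i, u i * logb 2 (q i / r i) = ∑ i, u i * logb 2 (q i) - ∑ i, u i * logb 2 (r i) := by
  rw [← sum_sub_distrib]
  refine sum_congr rfl fun i _ => ?_
  rcases eq_or_ne (u i) 0 with hu | hu
  · simp [hu]
  · rw [logb_div (h i hu).1 (h i hu).2, mul_sub]

lemma mul_logb_sub_logb_eq_klFun {a b : ℝ} (hab : a ≠ 0 → b ≠ 0) :
    a * (logb 2 a - logb 2 b) = (b * klFun (a / b) + a - b) / log 2 := by
  rcases eq_or_ne a 0 with rfl | ha
  · simp [klFun_zero]
  · have hb := hab ha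
    rw [klFun, ← logb_div ha hb, logb, mul_div_assoc']
    field_simp
    ring

lemma relEnt_eq_sum_klFun (huv : ∀ i, u i ≠ 0 → v i ≠ 0) :
    relEnt u v = (∑ i, v i * klFun (u i / v i) + (∑ i, u i - ∑ i, v i)) / log 2 := by
  simp only [relEnt, mul_logb_sub_logb_eq_klFun (huv _), ← sum_div, add_sub_assoc,
    sum_add_distrib, sum_sub_distrib]

lemma mul_klFun_div_nonneg {a b : ℝ} (ha : 0 ≤ a) (hb : 0 ≤ b) : 0 ≤ b * klFun (a / b) :=
  mul_nonneg hb (klFun_nonneg (div_nonneg ha hb))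

theorem relEnt_nonneg (hu : ∀ i, 0 ≤ u i) (hv : ∀ i, 0 ≤ v i) (huv : ∀ i, u i ≠ 0 → v i ≠ 0)
    (hsum : ∑ i, v i ≤ ∑ i, u i) : 0 ≤ relEnt u v := by
  rw [relEnt_eq_sum_klFun huv]
  exact div_nonneg (add_nonneg (sum_nonneg fun i _ => mul_klFun_div_nonneg (hu i) (hv i))
    (sub_nonneg.mpr hsum)) (log_pos one_lt_two).le

theorem eq_of_relEnt_eq_zero (hu : ∀ i, 0 ≤ u i) (hv : ∀ i, 0 ≤ v i)
    (huv : ∀ i, u i ≠ 0 → v i ≠ 0) (hsum : ∑ i, u i = ∑ i, v i) (h : relEnt u v = 0) :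
    u = v := by
  rw [relEnt_eq_sum_klFun huv, hsum, sub_self, add_zero, div_eq_zero_iff,
    or_iff_left (log_pos one_lt_two).ne',
    sum_eq_zero_iff_of_nonneg fun i _ => mul_klFun_div_nonneg (hu i) (hv i)] at h
  funext i
  rcases eq_or_ne (v i) 0 with hvi | hvi
  · rw [hvi]
    exact not_imp_not.mp (huv i) hvi
  · have := (mul_eq_zero.mp (h i (mem_univ i))).resolve_left hvi
    exact (div_eq_one_iff_eq hvi).mp ((klFun_eq_zero_iff (div_nonneg (hu i) (hv i))).mp this)

lemma sum_ne_zero_of_support (hv : ∀ i, 0 ≤ v i) (huv : ∀ i, u i ≠ 0 → v i ≠ 0)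
    (h : ∑ i, u i ≠ 0) : ∑ i, v i ≠ 0 := by
  obtain ⟨i, -, hi⟩ := exists_ne_zero_of_sum_ne_zero h
  exact (sum_pos' (fun j _ => hv j) ⟨i, mem_univ i, (hv i).lt_of_ne' (huv i hi)⟩).ne'

theorem mul_logb_sum_sub_logb_sum_le_relEnt (hu : ∀ i, 0 ≤ u i) (hv : ∀ i, 0 ≤ v i)
    (huv : ∀ i, u i ≠ 0 → v i ≠ 0) :
    (∑ i, u i) * (logb 2 (∑ i, u i) - logb 2 (∑ i, v i)) ≤ relEnt u v := by
  set U := ∑ i, u i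
  set V := ∑ i, v i
  rcases eq_or_ne U 0 with hU | hU
  · have hu0 := (sum_eq_zero_iff_of_nonneg fun i _ => hu i).mp hU
    simp [hU, relEnt, hu0]
  have hV := sum_ne_zero_of_support hv huv hU
  -- Gibbs' inequality against `v` rescaled to total mass `U`
  have hc : U / V ≠ 0 := div_ne_zero hU hV
  have gibbs := relEnt_nonneg (v := fun i => U / V * v i) hu
    (fun i => mul_nonneg (div_nonneg (sum_nonneg fun i _ => hu i) (sum_nonneg fun i _ => hv i))
      (hv i))
    (fun i hi => mul_ne_zero hc (huv i hi)) (by rw [← mul_sum, div_mul_cancel₀ U hV])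
  rw [relEnt_eq_sub, sum_mul_logb_mul (fun i hi => ⟨hc, huv i hi⟩), ← sum_mul,
    logb_div hU hV] at gibbs
  rw [relEnt_eq_sub]
  linarith

theorem relEnt_marginal_le {κ : Type*} [Fintype κ] {u v : ι × κ → ℝ} (hu : ∀ s, 0 ≤ u s)
    (hv : ∀ s, 0 ≤ v s) (huv : ∀ s, u s ≠ 0 → v s ≠ 0) :
    relEnt (fun i => ∑ k, u (i, k)) (fun i => ∑ k, v (i, k)) ≤ relEnt u v := by
  rw [relEnt.eq_1 u v, Fintype.sum_prod_type]
  exact sum_le_sum fun i _ => mul_logb_sum_sub_logb_sum_le_relEnt (fun k => hu (i, k))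
    (fun k => hv (i, k)) (fun k => huv (i, k))

theorem sum_mul_logb_le_relEnt_add_relEnt (hu : ∀ i, 0 ≤ u i) (hq : ∀ i, 0 ≤ q i)
    (hr : ∀ i, 0 ≤ r i) (hsupp : ∀ i, u i ≠ 0 → q i ≠ 0 ∧ r i ≠ 0)
    (hsum : ∑ i, q i * r i ≤ ∑ i, u i) :
    ∑ i, u i * logb 2 (u i) ≤ relEnt u q + relEnt u r := by
  have := relEnt_nonneg hu (fun i => mul_nonneg (hq i) (hr i))
    (fun i hi => mul_ne_zero (hsupp i hi).1 (hsupp i hi).2) hsum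
  rw [relEnt_eq_sub, sum_mul_logb_mul hsupp] at this
  rw [relEnt_eq_sub, relEnt_eq_sub]
  linarith

end RelEnt

noncomputable def law {Ω β : Type*} [Fintype Ω] (p : Ω → ℝ) (V : Ω → β) (v : β) : ℝ :=
  pr p {ω | V ω = v}

section Law

variable {Ω β γ σ τ : Type*} [Fintype Ω] {p : Ω → ℝ}

lemma law_nonneg (hp : ∀ ω, 0 ≤ p ω) (V : Ω → β) (v : β) : 0 ≤ law p V v :=
  sum_nonneg fun ω _ => Set.indicator_nonneg (fun ω _ => hp ω) ω

lemma sum_law [Fintype β] (V : Ω → β) : ∑ v, law p V v = ∑ ω, p ω := by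
  classical
  simp only [law, pr, Set.indicator_apply, Set.mem_ofPred_eq]
  rw [sum_comm]
  simp

lemma law_eq_sum_fiber [Fintype σ] [DecidableEq τ] {S : Ω → σ} {T : Ω → τ} {g : σ → τ}
    (hT : ∀ ω, T ω = g (S ω)) (t : τ) : law p T t = ∑ s with g s = t, law p S s := by
  classical
  simp only [law, pr, Set.indicator_apply, Set.mem_ofPred_eq, hT]
  rw [sum_comm]
  refine sum_congr rfl fun ω _ => ?_
  simp

lemma sum_law_mul_of_eq_comp [Fintype σ] [Fintype τ] {S : Ω → σ} {T : Ω → τ} {g : σ → τ}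
    (hT : ∀ ω, T ω = g (S ω)) (φ : τ → ℝ) :
    ∑ s, law p S s * φ (g s) = ∑ t, law p T t * φ t := by
  classical
  simp only [law_eq_sum_fiber hT, sum_mul]
  rw [← sum_fiberwise univ g]
  exact sum_congr rfl fun t _ => sum_congr rfl fun s hs => by rw [(mem_filter.mp hs).2]

lemma sum_law_mul_logb_law [Fintype σ] [Fintype τ] {S : Ω → σ} {T : Ω → τ} {g : σ → τ}
    (hT : ∀ ω, T ω = g (S ω)) : ∑ s, law p S s * logb 2 (law p T (g s)) = -ent p T := by
  rw [sum_law_mul_of_eq_comp hT fun t => logb 2 (law p T t), ent, neg_neg]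
  rfl

lemma sum_law_mul_logb_self [Fintype σ] (S : Ω → σ) :
    ∑ s, law p S s * logb 2 (law p S s) = -ent p S := by
  rw [ent, neg_neg]
  rfl

lemma law_le_of_eq_comp (hp : ∀ ω, 0 ≤ p ω) {S : Ω → σ} {T : Ω → τ} {g : σ → τ}
    (hT : ∀ ω, T ω = g (S ω)) (s : σ) : law p S s ≤ law p T (g s) :=
  sum_le_sum fun ω _ => Set.indicator_le_indicator_of_subset
    (fun ω (h : S ω = s) => show T ω = g s by rw [hT, h]) hp ω

lemma law_ne_zero_of_eq_comp (hp : ∀ ω, 0 ≤ p ω) {S : Ω → σ} {T : Ω → τ} {g : σ → τ}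
    (hT : ∀ ω, T ω = g (S ω)) {s : σ} (h : law p S s ≠ 0) : law p T (g s) ≠ 0 :=
  ((law_nonneg hp S s).lt_of_ne' h |>.trans_le (law_le_of_eq_comp hp hT s)).ne'

lemma law_eq_of_injective {S : Ω → σ} {T : Ω → τ} {g : σ → τ} (hg : Function.Injective g)
    (hT : ∀ ω, T ω = g (S ω)) (s : σ) : law p T (g s) = law p S s := by
  simp only [law, hT, hg.eq_iff]

lemma ent_eq_of_injective [Fintype σ] [Fintype τ] {S : Ω → σ} {T : Ω → τ} {g : σ → τ}
    (hg : Function.Injective g) (hT : ∀ ω, T ω = g (S ω)) : ent p T = ent p S := by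
  rw [← neg_neg (ent p T), ← sum_law_mul_logb_law hT]
  simp only [law_eq_of_injective hg hT]
  rfl

lemma law_swap (V : Ω → β) (W : Ω → γ) (v : β) (w : γ) :
    law p (fun ω => (W ω, V ω)) (w, v) = law p (fun ω => (V ω, W ω)) (v, w) :=
  law_eq_of_injective (S := fun ω => (V ω, W ω)) Prod.swap_injective (fun _ => rfl) (v, w)

lemma sum_law_pair_right [Fintype γ] (V : Ω → β) (W : Ω → γ) (v : β) :
    ∑ w, law p (fun ω => (V ω, W ω)) (v, w) = law p V v := by
  classical
  simp only [law, pr, Set.indicator_apply, Set.mem_ofPred_eq, Prod.mk.injEq]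
  rw [sum_comm]
  refine sum_congr rfl fun ω _ => ?_
  by_cases h : V ω = v <;> simp [h]

lemma sum_law_pair_left [Fintype β] (V : Ω → β) (W : Ω → γ) (w : γ) :
    ∑ v, law p (fun ω => (V ω, W ω)) (v, w) = law p W w := by
  simp only [← law_swap V W, sum_law_pair_right]

end Law

/-- `P(v|u) P(w|u) P(u)`: the law of `((V,W),U)` with `V` and `W` made conditionally independent
given `U`. -/
noncomputable def condIndepLaw {Ω β γ δ : Type*} [Fintype Ω] (p : Ω → ℝ) (V : Ω → β)
    (W : Ω → γ) (U : Ω → δ) (s : (β × γ) × δ) : ℝ :=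
  law p (fun ω => (V ω, U ω)) (s.1.1, s.2) * law p (fun ω => (W ω, U ω)) (s.1.2, s.2) /
    law p U s.2

section CondIndepLaw

variable {Ω β γ δ : Type*} [Fintype Ω] {p : Ω → ℝ}

lemma condIndepLaw_factors_ne_zero (hp : ∀ ω, 0 ≤ p ω) (V : Ω → β) (W : Ω → γ) (U : Ω → δ)
    (s : (β × γ) × δ) (h : law p (fun ω => ((V ω, W ω), U ω)) s ≠ 0) :
    (law p (fun ω => (V ω, U ω)) (s.1.1, s.2) ≠ 0 ∧
      law p (fun ω => (W ω, U ω)) (s.1.2, s.2) ≠ 0) ∧ law p U s.2 ≠ 0 :=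
  ⟨⟨law_ne_zero_of_eq_comp hp (g := fun s => (s.1.1, s.2)) (fun _ => rfl) h,
    law_ne_zero_of_eq_comp hp (g := fun s => (s.1.2, s.2)) (fun _ => rfl) h⟩,
    law_ne_zero_of_eq_comp hp (g := Prod.snd) (fun _ => rfl) h⟩

lemma condIndepLaw_ne_zero (hp : ∀ ω, 0 ≤ p ω) {V : Ω → β} {W : Ω → γ} {U : Ω → δ}
    {s : (β × γ) × δ} (h : law p (fun ω => ((V ω, W ω), U ω)) s ≠ 0) :
    condIndepLaw p V W U s ≠ 0 :=
  have h := condIndepLaw_factors_ne_zero hp V W U s h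
  div_ne_zero (mul_ne_zero h.1.1 h.1.2) h.2

lemma condIndepLaw_nonneg (hp : ∀ ω, 0 ≤ p ω) (V : Ω → β) (W : Ω → γ) (U : Ω → δ)
    (s : (β × γ) × δ) : 0 ≤ condIndepLaw p V W U s :=
  div_nonneg (mul_nonneg (law_nonneg hp _ _) (law_nonneg hp _ _)) (law_nonneg hp _ _)

lemma condIndepLaw_div_law_ne_zero (hp : ∀ ω, 0 ≤ p ω) {V : Ω → β} {W : Ω → γ} {U : Ω → δ}
    {s : (β × γ) × δ} (h : law p (fun ω => ((V ω, W ω), U ω)) s ≠ 0) :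
    condIndepLaw p V W U s ≠ 0 ∧ law p V s.1.1 ≠ 0 :=
  ⟨condIndepLaw_ne_zero hp h, law_ne_zero_of_eq_comp hp (g := fun s => s.1.1) (fun _ => rfl) h⟩

end CondIndepLaw

section Information

variable {Ω β γ δ : Type*} [Fintype Ω] [Fintype β] [Fintype γ] [Fintype δ] {p : Ω → ℝ}

lemma mi_eq_relEnt (hp : ∀ ω, 0 ≤ p ω) (V : Ω → β) (W : Ω → γ) :
    mi p V W = relEnt (law p fun ω => (V ω, W ω)) fun s => law p V s.1 * law p W s.2 := by
  have hsupp (s : β × γ) (h : law p (fun ω => (V ω, W ω)) s ≠ 0) :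
      law p V s.1 ≠ 0 ∧ law p W s.2 ≠ 0 :=
    ⟨law_ne_zero_of_eq_comp hp (g := Prod.fst) (fun _ => rfl) h,
      law_ne_zero_of_eq_comp hp (g := Prod.snd) (fun _ => rfl) h⟩
  have hV : ∑ s, law p (fun ω => (V ω, W ω)) s * logb 2 (law p V s.1) = -ent p V :=
    sum_law_mul_logb_law fun _ => rfl
  have hW : ∑ s, law p (fun ω => (V ω, W ω)) s * logb 2 (law p W s.2) = -ent p W :=
    sum_law_mul_logb_law fun _ => rfl
  rw [relEnt_eq_sub, sum_mul_logb_mul hsupp, sum_law_mul_logb_self, hV, hW, mi]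
  ring

lemma sum_condIndepLaw (V : Ω → β) (W : Ω → γ) (U : Ω → δ) :
    ∑ s, condIndepLaw p V W U s = ∑ ω, p ω := by
  rw [Fintype.sum_prod_type_right, ← sum_law U]
  refine sum_congr rfl fun u _ => ?_
  rw [Fintype.sum_prod_type]
  exact sum_sum_mul_div_eq (sum_law_pair_left V U u) (sum_law_pair_left W U u)

lemma cmi_eq_relEnt (hp : ∀ ω, 0 ≤ p ω) (V : Ω → β) (W : Ω → γ) (U : Ω → δ) :
    cmi p V W U = relEnt (law p fun ω => ((V ω, W ω), U ω)) (condIndepLaw p V W U) := by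
  have hsupp := condIndepLaw_factors_ne_zero hp V W U
  have hassoc : ent p (fun ω => (V ω, W ω, U ω)) = ent p fun ω => ((V ω, W ω), U ω) :=
    ent_eq_of_injective (Equiv.prodAssoc β γ δ).injective fun _ => rfl
  have hVU : ∑ s, law p (fun ω => ((V ω, W ω), U ω)) s *
      logb 2 (law p (fun ω => (V ω, U ω)) (s.1.1, s.2)) = -ent p fun ω => (V ω, U ω) :=
    sum_law_mul_logb_law fun _ => rfl
  have hWU : ∑ s, law p (fun ω => ((V ω, W ω), U ω)) s *
      logb 2 (law p (fun ω => (W ω, U ω)) (s.1.2, s.2)) = -ent p fun ω => (W ω, U ω) :=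
    sum_law_mul_logb_law fun _ => rfl
  have hU : ∑ s, law p (fun ω => ((V ω, W ω), U ω)) s * logb 2 (law p U s.2) = -ent p U :=
    sum_law_mul_logb_law fun _ => rfl
  rw [relEnt_eq_sub]
  simp only [condIndepLaw]
  rw [sum_mul_logb_div fun s h => ⟨mul_ne_zero (hsupp s h).1.1 (hsupp s h).1.2, (hsupp s h).2⟩,
    sum_mul_logb_mul fun s h => (hsupp s h).1, sum_law_mul_logb_self,
    hVU, hWU, hU, cmi, hassoc]
  ring

lemma law_eq_mul_of_mi_eq_zero (hp : IsPMF p) {V : Ω → β} {W : Ω → γ} (h : mi p V W = 0) :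
    (law p fun ω => (V ω, W ω)) = fun s => law p V s.1 * law p W s.2 := by
  rw [mi_eq_relEnt hp.1] at h
  refine eq_of_relEnt_eq_zero (law_nonneg hp.1 _) (fun s => mul_nonneg (law_nonneg hp.1 _ _)
    (law_nonneg hp.1 _ _)) (fun s hs => mul_ne_zero ?_ ?_) ?_ h
  · exact law_ne_zero_of_eq_comp hp.1 (g := Prod.fst) (fun _ => rfl) hs
  · exact law_ne_zero_of_eq_comp hp.1 (g := Prod.snd) (fun _ => rfl) hs
  · rw [sum_law, Fintype.sum_prod_type, ← Fintype.sum_mul_sum, sum_law, sum_law, hp.2, one_mul]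

lemma law_eq_condIndepLaw_of_cmi_eq_zero (hp : IsPMF p) {V : Ω → β} {W : Ω → γ} {U : Ω → δ}
    (h : cmi p V W U = 0) : (law p fun ω => ((V ω, W ω), U ω)) = condIndepLaw p V W U := by
  rw [cmi_eq_relEnt hp.1] at h
  exact eq_of_relEnt_eq_zero (law_nonneg hp.1 _) (condIndepLaw_nonneg hp.1 V W U)
    (fun _ => condIndepLaw_ne_zero hp.1) (by rw [sum_law, sum_condIndepLaw]) h

lemma cmi_comm (V : Ω → β) (W : Ω → γ) (U : Ω → δ) : cmi p V W U = cmi p W V U := by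
  have hswap : ent p (fun ω => (W ω, V ω, U ω)) = ent p fun ω => (V ω, W ω, U ω) :=
    ent_eq_of_injective (g := fun s => (s.2.1, s.1, s.2.2))
      (fun s t h => by simp only [Prod.mk.injEq] at h; exact Prod.ext h.2.1 (Prod.ext h.1 h.2.2))
      fun _ => rfl
  rw [cmi, cmi, hswap]
  ring

end Information

/-- `∑ᵤ P(u|v) P(w|u)`, the transition probability from `v` to `w` of the Markov chain
`V → U → W`. -/
noncomputable def kernelThrough {Ω β γ δ : Type*} [Fintype Ω] [Fintype δ] (p : Ω → ℝ)
    (V : Ω → β) (W : Ω → γ) (U : Ω → δ) (s : β × γ) : ℝ :=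
  ∑ u, condIndepLaw p V W U (s, u) / law p V s.1

section KernelThrough

variable {Ω β γ δ : Type*} [Fintype Ω] [Fintype δ] {p : Ω → ℝ}

lemma kernelThrough_nonneg (hp : ∀ ω, 0 ≤ p ω) (V : Ω → β) (W : Ω → γ) (U : Ω → δ)
    (s : β × γ) : 0 ≤ kernelThrough p V W U s :=
  sum_nonneg fun _ _ => div_nonneg (condIndepLaw_nonneg hp V W U _) (law_nonneg hp V _)

lemma kernelThrough_ne_zero (hp : ∀ ω, 0 ≤ p ω) {V : Ω → β} {W : Ω → γ} (U : Ω → δ)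
    {s : β × γ} (h : law p (fun ω => (V ω, W ω)) s ≠ 0) : kernelThrough p V W U s ≠ 0 := by
  rw [← sum_law_pair_right _ U] at h
  refine sum_ne_zero_of_support (fun _ => div_nonneg (condIndepLaw_nonneg hp V W U _)
    (law_nonneg hp V _)) (fun u hu => ?_) h
  have := condIndepLaw_div_law_ne_zero hp hu
  exact div_ne_zero this.1 this.2

lemma relEnt_kernelThrough_le [Fintype β] [Fintype γ] (hp : ∀ ω, 0 ≤ p ω) (V : Ω → β)
    (W : Ω → γ) (U : Ω → δ) :
    relEnt (law p fun ω => (V ω, W ω)) (kernelThrough p V W U) ≤ cmi p V W U - ent p V := by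
  have hmarg := relEnt_marginal_le (law_nonneg hp _)
    (fun s => div_nonneg (condIndepLaw_nonneg hp V W U s) (law_nonneg hp V s.1.1))
    fun s hs => div_ne_zero (condIndepLaw_div_law_ne_zero hp hs).1
      (condIndepLaw_div_law_ne_zero hp hs).2
  have hV : ∑ s, law p (fun ω => ((V ω, W ω), U ω)) s * logb 2 (law p V s.1.1) = -ent p V :=
    sum_law_mul_logb_law fun _ => rfl
  have hcmi : relEnt (law p fun ω => ((V ω, W ω), U ω))
      (fun s => condIndepLaw p V W U s / law p V s.1.1) = cmi p V W U - ent p V := by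
    rw [relEnt_eq_sub, sum_mul_logb_div fun s hs => condIndepLaw_div_law_ne_zero hp hs,
      ← sub_add, ← relEnt_eq_sub, ← cmi_eq_relEnt hp, hV, sub_eq_add_neg]
  simp only [sum_law_pair_right] at hmarg
  exact hcmi ▸ hmarg

lemma relEnt_kernelThrough_swap_le [Fintype β] [Fintype γ] (hp : ∀ ω, 0 ≤ p ω) (V : Ω → β)
    (W : Ω → γ) (U : Ω → δ) :
    relEnt (law p fun ω => (V ω, W ω)) (fun s => kernelThrough p W V U s.swap) ≤
      cmi p V W U - ent p W := by
  have hswap : relEnt (law p fun ω => (V ω, W ω)) (fun s => kernelThrough p W V U s.swap) =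
      relEnt (law p fun ω => (W ω, V ω)) (kernelThrough p W V U) := by
    simp only [relEnt, Fintype.sum_prod_type, Prod.swap_prod_mk, law_swap W V]
    exact sum_comm
  rw [hswap, cmi_comm]
  exact relEnt_kernelThrough_le hp W V U

end KernelThrough

section ZhangYeung

variable {Ω α β χ υ : Type*} [Fintype Ω] [Fintype α] [Fintype β] [Fintype χ] [Fintype υ]
  {p : Ω → ℝ} {A : Ω → α} {B : Ω → β} {X : Ω → χ} {Y : Ω → υ}

lemma sum_mul_div_eq_mul_of_mi_eq_zero_of_cmi_eq_zero (hp : IsPMF p) (h1 : mi p X Y = 0)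
    (h2 : cmi p X Y A = 0) (x : χ) (y : υ) :
    ∑ a, law p (fun ω => (A ω, X ω)) (a, x) * law p (fun ω => (A ω, Y ω)) (a, y) / law p A a =
      law p X x * law p Y y := by
  rw [← congrFun (law_eq_mul_of_mi_eq_zero hp h1) (x, y), ← sum_law_pair_right _ A,
    law_eq_condIndepLaw_of_cmi_eq_zero hp h2]
  simp only [condIndepLaw, law_swap A X, law_swap A Y]

lemma sum_kernelThrough_mul_kernelThrough_swap_eq_one (hp : IsPMF p)
    (hind : ∀ x y, ∑ a, law p (fun ω => (A ω, X ω)) (a, x) * law p (fun ω => (A ω, Y ω)) (a, y) /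
      law p A a = law p X x * law p Y y) :
    ∑ s, kernelThrough p A B X s * kernelThrough p B A Y s.swap = 1 := by
  have hcancel (b : β) (x : χ) (y : υ) :
      law p X x * law p Y y * (law p (fun ω => (B ω, X ω)) (b, x) *
        law p (fun ω => (B ω, Y ω)) (b, y) / (law p X x * law p Y y * law p B b)) =
      law p (fun ω => (B ω, X ω)) (b, x) * law p (fun ω => (B ω, Y ω)) (b, y) / law p B b := by
    refine mul_div_mul_left_of_eq_zero_imp fun h => ?_
    rcases mul_eq_zero.mp h with hx | hy
    · rw [not_imp_not.mp (law_ne_zero_of_eq_comp hp.1 (S := fun ω => (B ω, X ω)) (g := Prod.snd)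
        fun _ => rfl) hx, zero_mul]
    · rw [not_imp_not.mp (law_ne_zero_of_eq_comp hp.1 (S := fun ω => (B ω, Y ω)) (g := Prod.snd)
        fun _ => rfl) hy, mul_zero]
  calc ∑ s, kernelThrough p A B X s * kernelThrough p B A Y s.swap
      = ∑ b, ∑ x, ∑ y, ∑ a, law p (fun ω => (A ω, X ω)) (a, x) *
          law p (fun ω => (A ω, Y ω)) (a, y) / law p A a *
          (law p (fun ω => (B ω, X ω)) (b, x) * law p (fun ω => (B ω, Y ω)) (b, y) /
            (law p X x * law p Y y * law p B b)) := by
        rw [Fintype.sum_prod_type_right]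
        refine sum_congr rfl fun b _ => ?_
        simp only [kernelThrough, condIndepLaw, Prod.swap_prod_mk, Fintype.sum_mul_sum]
        rw [sum_comm]
        refine sum_congr rfl fun x _ => ?_
        rw [sum_comm]
        exact sum_congr rfl fun y _ => sum_congr rfl fun a _ => by ring
    _ = ∑ b, ∑ x, ∑ y, law p (fun ω => (B ω, X ω)) (b, x) *
          law p (fun ω => (B ω, Y ω)) (b, y) / law p B b := by
        simp only [← sum_mul, hind, hcancel]
    _ = 1 := by
        simp only [sum_sum_mul_div_eq (sum_law_pair_right B X _) (sum_law_pair_right B Y _),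
          sum_law, hp.2]

end ZhangYeung

/-- The [ZY97] conditional inequality: if `I(X:Y) = 0` and `I(X:Y|A) = 0` then
`I(A:B) ≤ I(A:B|X) + I(A:B|Y)`. -/
theorem stmt_14 {Ω α β χ υ : Type*}
    [Fintype Ω] [Fintype α] [Fintype β] [Fintype χ] [Fintype υ]
    (p : Ω → ℝ) (hp : IsPMF p)
    (A : Ω → α) (B : Ω → β) (X : Ω → χ) (Y : Ω → υ)
    (h1 : mi p X Y = 0) (h2 : cmi p X Y A = 0) :
    mi p A B ≤ cmi p A B X + cmi p A B Y := by
  have hX := relEnt_kernelThrough_le hp.1 A B X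
  have hY := relEnt_kernelThrough_swap_le hp.1 A B Y
  have hsupp (s : α × β) (h : law p (fun ω => (A ω, B ω)) s ≠ 0) :
      kernelThrough p A B X s ≠ 0 ∧ kernelThrough p B A Y s.swap ≠ 0 :=
    ⟨kernelThrough_ne_zero hp.1 X h, kernelThrough_ne_zero hp.1 Y
      (law_ne_zero_of_eq_comp hp.1 (g := Prod.swap) (fun _ => rfl) h)⟩
  have hgibbs := sum_mul_logb_le_relEnt_add_relEnt (law_nonneg hp.1 _)
    (kernelThrough_nonneg hp.1 A B X) (fun s => kernelThrough_nonneg hp.1 B A Y s.swap) hsupp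
    (by rw [sum_kernelThrough_mul_kernelThrough_swap_eq_one hp
      (sum_mul_div_eq_mul_of_mi_eq_zero_of_cmi_eq_zero hp h1 h2), sum_law, hp.2])
  rw [sum_law_mul_logb_self] at hgibbs
  rw [mi]
  linarith
end

section
/- Let G = (V₁, V₂, E) be a finite edge-colored bipartite graph equipped with a probability distribution on its edge set E, and suppose G has the property (**): for every biclique C of G and every three edges (x,y), (x',y), (x,y') of G whose endpoints all lie in C, if (x',y) and (x,y') have the same color a, then the color of (x,y) also equals a. Let (X, Y, A) be the random variables where X is the left end, Y the right end, and A the color of a random edge drawn from the given distribution. Then bcc(G) ≥ 2^{(H(A|X) + H(A|Y) − H(A))/2}. -/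
open Finset

/-!
Let `Z` be the index of a biclique of the cover containing the random edge. By (**), inside the
biclique `C z` every color `a` occupies exactly the combinatorial rectangle `R z a × S z a` of rows
and columns that meet color `a` in `C z`, and these rectangles are disjoint. Hence, given `Z`,
the color is pinned down by a rectangle partition, for which
`H(A | X, Z) + H(A | Y, Z) ≤ H(A | Z)`. Together with `H(A | X) ≤ H(Z | X) + H(A | X, Z)`,
`H(Z | X) ≤ log t` (and the same for `Y`) and `H(A | Z) ≤ H(A)` this gives
`H(A | X) + H(A | Y) - H(A) ≤ 2 log t`. Every inequality is an instance of Gibbs' inequality.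
-/

open Real

section Probability

variable {Ω : Type*} [Fintype Ω] {p : Ω → ℝ}

lemma pr_nonneg (hp0 : ∀ ω, 0 ≤ p ω) (S : Set Ω) : 0 ≤ pr p S :=
  Finset.sum_nonneg fun ω _ => Set.indicator_nonneg (fun ω _ => hp0 ω) ω

lemma pr_mono (hp0 : ∀ ω, 0 ≤ p ω) {S T : Set Ω} (h : S ⊆ T) : pr p S ≤ pr p T :=
  Finset.sum_le_sum fun ω _ => Set.indicator_le_indicator_of_subset h (fun ω => hp0 ω) ω

lemma pr_pos (hp0 : ∀ ω, 0 ≤ p ω) {S : Set Ω} {ω : Ω} (hω : p ω ≠ 0) (hS : ω ∈ S) :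
    0 < pr p S := by
  have h := Finset.single_le_sum (fun ω _ => Set.indicator_nonneg (fun ω _ => hp0 ω) ω)
    (Finset.mem_univ ω) (f := S.indicator p)
  rw [Set.indicator_of_mem hS] at h
  exact ((hp0 ω).lt_of_ne' hω).trans_le h

lemma pr_fiber_pos {β : Type*} (hp0 : ∀ ω, 0 ≤ p ω) (V : Ω → β) {ω : Ω} (hω : p ω ≠ 0) :
    0 < pr p {ω' | V ω' = V ω} :=
  pr_pos hp0 hω rfl

lemma exists_ne_zero_of_isPMF (hp : IsPMF p) : ∃ ω, p ω ≠ 0 := by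
  by_contra! h
  simpa [h] using hp.2

lemma sum_mul_comp_eq_sum_pr {β : Type*} [Fintype β] (p : Ω → ℝ) (V : Ω → β) (F : β → ℝ) :
    ∑ ω, p ω * F (V ω) = ∑ v, pr p {ω | V ω = v} * F v := by
  classical
  simp only [pr, Finset.sum_mul]
  rw [Finset.sum_comm]
  refine Finset.sum_congr rfl fun ω _ => ?_
  simp [Set.indicator_apply]

lemma sum_pr_fiber {β : Type*} [Fintype β] (hp : IsPMF p) (V : Ω → β) :
    ∑ v, pr p {ω | V ω = v} = 1 := by
  simpa [hp.2] using (sum_mul_comp_eq_sum_pr p V fun _ => 1).symm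

lemma sum_pr_le_pr_of_pairwise {ι : Type*} [Fintype ι] (hp0 : ∀ ω, 0 ≤ p ω) (E : ι → Set Ω)
    (F : Set Ω) (hEF : ∀ i, E i ⊆ F) (hE : ∀ i j ω, ω ∈ E i → ω ∈ E j → i = j) :
    ∑ i, pr p (E i) ≤ pr p F := by
  simp only [pr]
  rw [Finset.sum_comm]
  refine Finset.sum_le_sum fun ω _ => ?_
  by_cases h : ∃ i, ω ∈ E i
  · obtain ⟨i, hi⟩ := h
    rw [Finset.sum_eq_single i (fun j _ hj => Set.indicator_of_notMem
      (fun hj' => hj (hE j i ω hj' hi)) _) (by simp), Set.indicator_of_mem hi,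
      Set.indicator_of_mem (hEF i hi)]
  · push Not at h
    simp only [Set.indicator_of_notMem (h _), Finset.sum_const_zero]
    exact Set.indicator_nonneg (fun ω _ => hp0 ω) ω

lemma sum_mul_le_sum_mul_of_support (hp0 : ∀ ω, 0 ≤ p ω) {f g : Ω → ℝ}
    (h : ∀ ω, p ω ≠ 0 → f ω ≤ g ω) : ∑ ω, p ω * f ω ≤ ∑ ω, p ω * g ω := by
  refine Finset.sum_le_sum fun ω _ => ?_
  by_cases hω : p ω = 0
  · simp [hω]
  · exact mul_le_mul_of_nonneg_left (h ω hω) (hp0 ω)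

lemma sum_mul_congr_of_support {f g : Ω → ℝ} (h : ∀ ω, p ω ≠ 0 → f ω = g ω) :
    ∑ ω, p ω * f ω = ∑ ω, p ω * g ω := by
  refine Finset.sum_congr rfl fun ω _ => ?_
  by_cases hω : p ω = 0
  · simp [hω]
  · rw [h ω hω]

lemma sum_mul_div_pr_le_sum {β : Type*} [Fintype β] (V : Ω → β) (b : β → ℝ) (hb : ∀ v, 0 ≤ b v) :
    ∑ ω, p ω * (b (V ω) / pr p {ω' | V ω' = V ω}) ≤ ∑ v, b v := by
  rw [sum_mul_comp_eq_sum_pr p V fun v => b v / pr p {ω | V ω = v}]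
  refine Finset.sum_le_sum fun v _ => ?_
  by_cases h : pr p {ω | V ω = v} = 0
  · simpa [h] using hb v
  · rw [mul_div_cancel₀ _ h]

lemma sum_pr_pair_eq_and_mem_le {α ζ : Type*} [Fintype α] (hp0 : ∀ ω, 0 ≤ p ω) (Z : Ω → ζ)
    (X : Ω → α) (z : ζ) (T : Set α) :
    ∑ x, pr p {ω | (Z ω, X ω) = (z, x) ∧ x ∈ T} ≤ pr p {ω | Z ω = z ∧ X ω ∈ T} := by
  refine sum_pr_le_pr_of_pairwise hp0 _ _ (fun x ω hω => ?_) fun x x' ω hx hx' => ?_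
  · obtain ⟨h, hx⟩ := hω
    obtain ⟨rfl, rfl⟩ := Prod.mk.inj h
    exact ⟨rfl, hx⟩
  · exact (Prod.mk.inj hx.1).2.symm.trans (Prod.mk.inj hx'.1).2

/-- Gibbs' inequality. -/
lemma sum_mul_logb_sub_logb_pr_le (hp : IsPMF p) {β : Type*} [Fintype β] (V : Ω → β)
    (b : β → ℝ) (hb : ∀ v, 0 ≤ b v) (hbV : ∀ ω, p ω ≠ 0 → 0 < b (V ω)) {B : ℝ} (hB : 0 < B)
    (hsum : ∑ v, b v ≤ B) :
    ∑ ω, p ω * (logb 2 (b (V ω)) - logb 2 (pr p {ω' | V ω' = V ω})) ≤ logb 2 B := by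
  obtain ⟨hp0, hp1⟩ := hp
  set P : β → ℝ := fun v => pr p {ω | V ω = v}
  set y : Ω → ℝ := fun ω => b (V ω) / P (V ω)
  have hpt : ∀ ω, p ω ≠ 0 →
      logb 2 (b (V ω)) - logb 2 (P (V ω)) ≤ logb 2 B + (y ω / B - 1) / log 2 := by
    intro ω hω
    have hP : 0 < P (V ω) := pr_fiber_pos hp0 V hω
    have hy : 0 < y ω := div_pos (hbV ω hω) hP
    calc logb 2 (b (V ω)) - logb 2 (P (V ω)) = logb 2 B + log (y ω / B) / log 2 := by
          rw [← logb, logb_div hy.ne' hB.ne', logb_div (hbV ω hω).ne' hP.ne']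
          ring
      _ ≤ logb 2 B + (y ω / B - 1) / log 2 := by
          gcongr
          exact log_le_sub_one_of_pos (div_pos hy hB)
  have hmass : (∑ ω, p ω * y ω) / B ≤ 1 :=
    (div_le_one hB).mpr ((sum_mul_div_pr_le_sum V b hb).trans hsum)
  calc ∑ ω, p ω * (logb 2 (b (V ω)) - logb 2 (P (V ω)))
      ≤ ∑ ω, p ω * (logb 2 B + (y ω / B - 1) / log 2) := sum_mul_le_sum_mul_of_support hp0 hpt
    _ = (∑ ω, p ω) * logb 2 B + ((∑ ω, p ω * y ω) / B - ∑ ω, p ω) / log 2 := by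
        rw [Finset.sum_mul, Finset.sum_div, ← Finset.sum_sub_distrib, Finset.sum_div,
          ← Finset.sum_add_distrib]
        exact Finset.sum_congr rfl fun ω _ => by ring
    _ ≤ logb 2 B := by
        rw [hp1, one_mul]
        linarith [div_nonpos_of_nonpos_of_nonneg (sub_nonpos.mpr hmass) (log_pos one_lt_two).le]

end Probability

section Entropy

variable {Ω α β γ ζ κ : Type*} [Fintype Ω] [Fintype α] [Fintype β] [Fintype γ] [Fintype ζ]
  [Fintype κ] {p : Ω → ℝ}

lemma ent_eq_neg_sum (p : Ω → ℝ) (V : Ω → β) :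
    ent p V = -∑ ω, p ω * logb 2 (pr p {ω' | V ω' = V ω}) :=
  congrArg Neg.neg (sum_mul_comp_eq_sum_pr p V fun v => logb 2 (pr p {ω | V ω = v})).symm

lemma ent_comp_le (hp0 : ∀ ω, 0 ≤ p ω) (V : Ω → β) (f : β → γ) :
    ent p (fun ω => f (V ω)) ≤ ent p V := by
  simp only [ent_eq_neg_sum, neg_le_neg_iff]
  refine sum_mul_le_sum_mul_of_support hp0 fun ω hω => ?_
  have hsub : {ω' | V ω' = V ω} ⊆ {ω' | f (V ω') = f (V ω)} := fun ω' h => congrArg f h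
  exact logb_le_logb_of_le one_lt_two (pr_fiber_pos hp0 V hω) (pr_mono hp0 hsub)

lemma condEnt_le_condEnt_add_condEnt (hp0 : ∀ ω, 0 ≤ p ω)
    (V : Ω → β) (W : Ω → γ) (U : Ω → ζ) :
    condEnt p V W ≤ condEnt p U W + condEnt p V (fun ω => (U ω, W ω)) := by
  have h : ent p (fun ω => (V ω, W ω)) ≤ ent p (fun ω => (V ω, U ω, W ω)) :=
    ent_comp_le hp0 (fun ω => (V ω, U ω, W ω)) fun x => (x.1, x.2.2)
  unfold condEnt
  linarith

lemma condEnt_le_logb_card (hp : IsPMF p) (Z : Ω → ζ) (X : Ω → α) :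
    condEnt p Z X ≤ logb 2 (Fintype.card ζ) := by
  obtain ⟨ω₀, -⟩ := exists_ne_zero_of_isPMF hp
  have hcard : (0 : ℝ) < Fintype.card ζ := Nat.cast_pos.mpr (Fintype.card_pos_iff.mpr ⟨Z ω₀⟩)
  have h := sum_mul_logb_sub_logb_pr_le hp (fun ω => (Z ω, X ω)) (fun v => pr p {ω | X ω = v.2})
    (fun v => pr_nonneg hp.1 _) (fun ω hω => pr_fiber_pos hp.1 X hω) hcard (by
      simp only [Fintype.sum_prod_type, Finset.sum_const, sum_pr_fiber hp, Finset.card_univ,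
        nsmul_one, le_refl])
  unfold condEnt
  simp only [ent_eq_neg_sum, mul_sub, Finset.sum_sub_distrib] at h ⊢
  linarith

lemma condEnt_le_ent (hp : IsPMF p) (A : Ω → κ) (Z : Ω → ζ) : condEnt p A Z ≤ ent p A := by
  have h := sum_mul_logb_sub_logb_pr_le hp (fun ω => (A ω, Z ω))
    (fun v => pr p {ω | A ω = v.1} * pr p {ω | Z ω = v.2})
    (fun v => mul_nonneg (pr_nonneg hp.1 _) (pr_nonneg hp.1 _))
    (fun ω hω => mul_pos (pr_fiber_pos hp.1 A hω) (pr_fiber_pos hp.1 Z hω)) one_pos (by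
      simp only [Fintype.sum_prod_type, ← Finset.sum_mul_sum, sum_pr_fiber hp, one_mul, le_refl])
  dsimp only at h
  rw [sum_mul_congr_of_support (g := fun ω => logb 2 (pr p {ω' | A ω' = A ω})
    + logb 2 (pr p {ω' | Z ω' = Z ω}) - logb 2 (pr p {ω' | (A ω', Z ω') = (A ω, Z ω)}))
    fun ω hω => by rw [logb_mul (pr_fiber_pos hp.1 A hω).ne' (pr_fiber_pos hp.1 Z hω).ne']] at h
  unfold condEnt
  simp only [ent_eq_neg_sum, mul_sub, mul_add, Finset.sum_sub_distrib, Finset.sum_add_distrib,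
    logb_one] at h ⊢
  linarith

end Entropy

section Rectangles

variable {Ω α β ζ κ : Type*} [Fintype Ω] [Fintype ζ] [Fintype κ]
  {p : Ω → ℝ} (X : Ω → α) (Y : Ω → β) (A : Ω → κ) (Z : Ω → ζ)
  (R : ζ → κ → Set α) (S : ζ → κ → Set β)

lemma condEnt_le_ent_add_sum_logb_pr_rows [Fintype α] (hp : IsPMF p)
    (hX : ∀ ω, p ω ≠ 0 → X ω ∈ R (Z ω) (A ω)) :
    condEnt p A (fun ω => (Z ω, X ω)) ≤ ent p (fun ω => (A ω, Z ω))
      + ∑ ω, p ω * logb 2 (pr p {ω' | Z ω' = Z ω ∧ X ω' ∈ R (Z ω) (A ω)}) := by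
  have hp0 := hp.1
  set q : ζ → κ → ℝ := fun z a => pr p {ω | Z ω = z ∧ X ω ∈ R z a}
  have hq : ∀ ω, p ω ≠ 0 → 0 < q (Z ω) (A ω) := fun ω hω => pr_pos hp0 hω ⟨rfl, hX ω hω⟩
  have hrows : ∀ ω, p ω ≠ 0 → {ω' | (Z ω', X ω') = (Z ω, X ω) ∧ X ω ∈ R (Z ω) (A ω)}
      = {ω' | (Z ω', X ω') = (Z ω, X ω)} := fun ω hω => by simp only [hX ω hω, and_true]
  have h := sum_mul_logb_sub_logb_pr_le hp (fun ω => (A ω, Z ω, X ω))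
    (fun v => pr p {ω | (Z ω, X ω) = v.2 ∧ v.2.2 ∈ R v.2.1 v.1}
      * pr p {ω | (A ω, Z ω) = (v.1, v.2.1)} / q v.2.1 v.1)
    (fun v => div_nonneg (mul_nonneg (pr_nonneg hp0 _) (pr_nonneg hp0 _)) (pr_nonneg hp0 _))
    (fun ω hω => by
      rw [hrows ω hω]
      exact div_pos (mul_pos (pr_fiber_pos hp0 (fun ω => (Z ω, X ω)) hω)
        (pr_fiber_pos hp0 (fun ω => (A ω, Z ω)) hω)) (hq ω hω)) one_pos (by
      simp only [Fintype.sum_prod_type]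
      calc _ ≤ ∑ a, ∑ z, pr p {ω | (A ω, Z ω) = (a, z)} :=
            Finset.sum_le_sum fun a _ => Finset.sum_le_sum fun z _ => by
              rw [← Finset.sum_div, ← Finset.sum_mul]
              refine div_le_of_le_mul₀ (pr_nonneg hp0 _) (pr_nonneg hp0 _) ?_
              rw [mul_comm]
              exact mul_le_mul_of_nonneg_left (sum_pr_pair_eq_and_mem_le hp0 Z X z (R z a))
                (pr_nonneg hp0 _)
        _ = 1 := by rw [← Fintype.sum_prod_type']; exact sum_pr_fiber hp _)
  dsimp only at h
  rw [sum_mul_congr_of_support (g := fun ω => logb 2 (pr p {ω' | (Z ω', X ω') = (Z ω, X ω)})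
    + logb 2 (pr p {ω' | (A ω', Z ω') = (A ω, Z ω)}) - logb 2 (q (Z ω) (A ω))
    - logb 2 (pr p {ω' | (A ω', Z ω', X ω') = (A ω, Z ω, X ω)})) fun ω hω => by
      rw [hrows ω hω, logb_div (mul_pos (pr_fiber_pos hp0 (fun ω => (Z ω, X ω)) hω)
        (pr_fiber_pos hp0 (fun ω => (A ω, Z ω)) hω)).ne' (hq ω hω).ne', logb_mul
        (pr_fiber_pos hp0 (fun ω => (Z ω, X ω)) hω).ne'
        (pr_fiber_pos hp0 (fun ω => (A ω, Z ω)) hω).ne']] at h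
  unfold condEnt
  simp only [ent_eq_neg_sum, mul_sub, mul_add, Finset.sum_sub_distrib, Finset.sum_add_distrib,
    logb_one] at h ⊢
  linarith

lemma condEnt_le_neg_ent_sub_sum_logb_pr_rows [Fintype β] (hp : IsPMF p)
    (hX : ∀ ω, p ω ≠ 0 → X ω ∈ R (Z ω) (A ω)) (hY : ∀ ω, p ω ≠ 0 → Y ω ∈ S (Z ω) (A ω))
    (hdisj : ∀ z a a' x y, x ∈ R z a → y ∈ S z a → x ∈ R z a' → y ∈ S z a' → a = a') :
    condEnt p A (fun ω => (Z ω, Y ω)) ≤ -ent p Z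
      - ∑ ω, p ω * logb 2 (pr p {ω' | Z ω' = Z ω ∧ X ω' ∈ R (Z ω) (A ω)}) := by
  have hp0 := hp.1
  have hq : ∀ ω, p ω ≠ 0 → 0 < pr p {ω' | Z ω' = Z ω ∧ X ω' ∈ R (Z ω) (A ω)} :=
    fun ω hω => pr_pos hp0 hω ⟨rfl, hX ω hω⟩
  have hcol : ∀ z y, ∑ a, pr p {ω | Z ω = z ∧ X ω ∈ R z a ∧ y ∈ S z a} ≤ pr p {ω | Z ω = z} :=
    fun z y => sum_pr_le_pr_of_pairwise hp0 _ _ (fun a ω hω => hω.1)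
      fun a a' ω ⟨_, hx, hy⟩ ⟨_, hx', hy'⟩ => hdisj z a a' (X ω) y hx hy hx' hy'
  have hcols : ∀ ω, p ω ≠ 0 → {ω' | Z ω' = Z ω ∧ X ω' ∈ R (Z ω) (A ω) ∧ Y ω ∈ S (Z ω) (A ω)}
      = {ω' | Z ω' = Z ω ∧ X ω' ∈ R (Z ω) (A ω)} := fun ω hω => by
    simp only [hY ω hω, and_true]
  have h := sum_mul_logb_sub_logb_pr_le hp (fun ω => (A ω, Z ω, Y ω))
    (fun v => pr p {ω | (Z ω, Y ω) = v.2}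
      * pr p {ω | Z ω = v.2.1 ∧ X ω ∈ R v.2.1 v.1 ∧ v.2.2 ∈ S v.2.1 v.1} / pr p {ω | Z ω = v.2.1})
    (fun v => div_nonneg (mul_nonneg (pr_nonneg hp0 _) (pr_nonneg hp0 _)) (pr_nonneg hp0 _))
    (fun ω hω => by
      rw [hcols ω hω]
      exact div_pos (mul_pos (pr_fiber_pos hp0 (fun ω => (Z ω, Y ω)) hω) (hq ω hω))
        (pr_fiber_pos hp0 Z hω)) one_pos (by
      rw [Fintype.sum_prod_type, Finset.sum_comm]
      calc _ ≤ ∑ zy : ζ × β, pr p {ω | (Z ω, Y ω) = zy} :=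
            Finset.sum_le_sum fun zy _ => by
              dsimp only
              rw [← Finset.sum_div, ← Finset.mul_sum]
              refine div_le_of_le_mul₀ (pr_nonneg hp0 _) (pr_nonneg hp0 _) ?_
              exact mul_le_mul_of_nonneg_left (hcol zy.1 zy.2) (pr_nonneg hp0 _)
        _ = 1 := sum_pr_fiber hp _)
  dsimp only at h
  rw [sum_mul_congr_of_support (g := fun ω => logb 2 (pr p {ω' | (Z ω', Y ω') = (Z ω, Y ω)})
    + logb 2 (pr p {ω' | Z ω' = Z ω ∧ X ω' ∈ R (Z ω) (A ω)}) - logb 2 (pr p {ω' | Z ω' = Z ω})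
    - logb 2 (pr p {ω' | (A ω', Z ω', Y ω') = (A ω, Z ω, Y ω)})) fun ω hω => by
      rw [hcols ω hω, logb_div (mul_pos (pr_fiber_pos hp0 (fun ω => (Z ω, Y ω)) hω)
        (hq ω hω)).ne' (pr_fiber_pos hp0 Z hω).ne', logb_mul
        (pr_fiber_pos hp0 (fun ω => (Z ω, Y ω)) hω).ne' (hq ω hω).ne']] at h
  unfold condEnt
  simp only [ent_eq_neg_sum, mul_sub, mul_add, Finset.sum_sub_distrib, Finset.sum_add_distrib,
    logb_one] at h ⊢
  linarith

lemma condEnt_add_condEnt_le_condEnt_of_rectangles [Fintype α] [Fintype β] (hp : IsPMF p)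
    (hX : ∀ ω, p ω ≠ 0 → X ω ∈ R (Z ω) (A ω)) (hY : ∀ ω, p ω ≠ 0 → Y ω ∈ S (Z ω) (A ω))
    (hdisj : ∀ z a a' x y, x ∈ R z a → y ∈ S z a → x ∈ R z a' → y ∈ S z a' → a = a') :
    condEnt p A (fun ω => (Z ω, X ω)) + condEnt p A (fun ω => (Z ω, Y ω)) ≤ condEnt p A Z := by
  have h₁ := condEnt_le_ent_add_sum_logb_pr_rows X A Z R hp hX
  have h₂ := condEnt_le_neg_ent_sub_sum_logb_pr_rows X Y A Z R S hp hX hY hdisj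
  unfold condEnt at h₁ h₂ ⊢
  linarith

lemma condEnt_add_condEnt_sub_ent_le_of_rectangles [Fintype α] [Fintype β] (hp : IsPMF p)
    (hX : ∀ ω, p ω ≠ 0 → X ω ∈ R (Z ω) (A ω)) (hY : ∀ ω, p ω ≠ 0 → Y ω ∈ S (Z ω) (A ω))
    (hdisj : ∀ z a a' x y, x ∈ R z a → y ∈ S z a → x ∈ R z a' → y ∈ S z a' → a = a') :
    condEnt p A X + condEnt p A Y - ent p A ≤ 2 * logb 2 (Fintype.card ζ) := by
  have hX' := condEnt_le_condEnt_add_condEnt hp.1 A X Z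
  have hY' := condEnt_le_condEnt_add_condEnt hp.1 A Y Z
  have hZX := condEnt_le_logb_card hp Z X
  have hZY := condEnt_le_logb_card hp Z Y
  have hAZ := condEnt_le_ent hp A Z
  have hrect := condEnt_add_condEnt_le_condEnt_of_rectangles X Y A Z R S hp hX hY hdisj
  linarith

end Rectangles

section Bicliques

variable {V₁ V₂ κ : Type*}

def colorRows (c : V₁ × V₂ → κ) (B : Finset V₁ × Finset V₂) (a : κ) : Set V₁ :=
  {x | x ∈ B.1 ∧ ∃ y ∈ B.2, c (x, y) = a}

def colorCols (c : V₁ × V₂ → κ) (B : Finset V₁ × Finset V₂) (a : κ) : Set V₂ :=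
  {y | y ∈ B.2 ∧ ∃ x ∈ B.1, c (x, y) = a}

lemma color_eq_of_mem_colorRows_of_mem_colorCols {c : V₁ × V₂ → κ} {B : Finset V₁ × Finset V₂}
    (hB : ∀ x ∈ B.1, ∀ x' ∈ B.1, ∀ y ∈ B.2, ∀ y' ∈ B.2,
      c (x', y) = c (x, y') → c (x, y) = c (x', y))
    {a : κ} {x : V₁} {y : V₂} (hx : x ∈ colorRows c B a) (hy : y ∈ colorCols c B a) :
    c (x, y) = a := by
  obtain ⟨hx, y', hy', rfl⟩ := hx
  obtain ⟨hy, x', hx', hc⟩ := hy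
  exact (hB x hx x' hx' y hy y' hy' hc).trans hc

end Bicliques

/-- Theorem on biclique coverings: for an edge-colored bipartite graph with property (**)
and a probability distribution on its edges, any biclique covering by `t` bicliques
satisfies `t ≥ 2^((H(A|X) + H(A|Y) - H(A))/2)`, where `X`, `Y`, `A` are the left end,
the right end and the color of a random edge. -/
theorem stmt_17 {V₁ V₂ κ : Type*} [Fintype V₁] [Fintype V₂] [Fintype κ]
    (E : Finset (V₁ × V₂)) (c : V₁ × V₂ → κ)
    (p : V₁ × V₂ → ℝ) (hp : IsPMF p) (hsupp : ∀ e, p e ≠ 0 → e ∈ E)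
    (hstar : ∀ (S₁ : Finset V₁) (S₂ : Finset V₂), S₁ ×ˢ S₂ ⊆ E →
      ∀ x ∈ S₁, ∀ x' ∈ S₁, ∀ y ∈ S₂, ∀ y' ∈ S₂,
        c (x', y) = c (x, y') → c (x, y) = c (x', y))
    (t : ℕ) (C : Fin t → Finset V₁ × Finset V₂)
    (hbic : ∀ i, (C i).1 ×ˢ (C i).2 ⊆ E)
    (hcov : ∀ e ∈ E, ∃ i, e.1 ∈ (C i).1 ∧ e.2 ∈ (C i).2) :
    (2 : ℝ) ^ ((condEnt p c Prod.fst + condEnt p c Prod.snd - ent p c) / 2) ≤ t := by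
  classical
  obtain ⟨ω₀, hω₀⟩ := exists_ne_zero_of_isPMF hp
  have ht : 0 < t := (hcov ω₀ (hsupp ω₀ hω₀)).choose.pos
  let Z : V₁ × V₂ → Fin t := fun ω => if h : ω ∈ E then (hcov ω h).choose else ⟨0, ht⟩
  have hZ : ∀ ω, p ω ≠ 0 → ω.1 ∈ (C (Z ω)).1 ∧ ω.2 ∈ (C (Z ω)).2 := fun ω hω => by
    simpa only [Z, dif_pos (hsupp ω hω)] using (hcov ω (hsupp ω hω)).choose_spec
  have hbound := condEnt_add_condEnt_sub_ent_le_of_rectangles Prod.fst Prod.snd c Z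
    (fun z => colorRows c (C z)) (fun z => colorCols c (C z)) hp
    (fun ω hω => ⟨(hZ ω hω).1, ω.2, (hZ ω hω).2, rfl⟩)
    (fun ω hω => ⟨(hZ ω hω).2, ω.1, (hZ ω hω).1, rfl⟩)
    (fun z _ _ _ _ hx hy hx' hy' =>
      (color_eq_of_mem_colorRows_of_mem_colorCols (hstar _ _ (hbic z)) hx hy).symm.trans
        (color_eq_of_mem_colorRows_of_mem_colorCols (hstar _ _ (hbic z)) hx' hy'))
  rw [Fintype.card_fin] at hbound
  calc (2 : ℝ) ^ ((condEnt p c Prod.fst + condEnt p c Prod.snd - ent p c) / 2)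
      ≤ 2 ^ logb 2 t := rpow_le_rpow_of_exponent_le one_le_two (by linarith)
    _ = t := rpow_logb two_pos (by norm_num) (Nat.cast_pos.mpr ht)
end

section
/- Let n, k be positive integers with 2k ≤ n, and let G_{n,k} be the bipartite graph whose left and right vertex sets are both the collection of k-element subsets of {1, …, n}, with an edge between x and y exactly when x and y are disjoint. If the edges of G_{n,k} can be covered by t bicliques, then t² ≥ C(n, 2k) / C(n−k, k)². -/
/- Every `2k`-subset `z` of the ground set splits as `x ∪ y` with `x, y` disjoint `k`-sets,
i.e. as an edge of `G_{n,k}`, and the edge `(x, y)` determines `z`. So the edges covered by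
the bicliques `Aᵢ × Bᵢ`, of which there are at most `∑ᵢ |Aᵢ| |Bᵢ|`, number at least
`C(n, 2k)`. On the other hand all members of `Aᵢ` avoid a fixed `k`-set of `Bᵢ`, so
`|Aᵢ| ≤ C(n - k, k)`, and likewise `|Bᵢ| ≤ C(n - k, k)`.
Hence `C(n, 2k) ≤ t C(n - k, k)² ≤ t² C(n - k, k)²`. -/

open Finset

/-- Vertices of the disjointness graph `G_{n,k}`: `k`-element subsets of `{1,…,n}`. -/
abbrev kSubsets (n k : ℕ) := {s : Finset (Fin n) // s.card = k}

section DisjointnessGraph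

variable {α : Type*} [DecidableEq α] {k : ℕ}

theorem exists_disjoint_union_eq_of_card_eq_two_mul {z : Finset α} (hz : #z = 2 * k) :
    ∃ x y : {s : Finset α // #s = k}, Disjoint x.1 y.1 ∧ x.1 ∪ y.1 = z := by
  obtain ⟨x, hxz, hx⟩ := exists_subset_card_eq (show k ≤ #z by omega)
  refine ⟨⟨x, hx⟩, ⟨z \ x, ?_⟩, disjoint_sdiff, union_sdiff_of_subset hxz⟩
  rw [card_sdiff_of_subset hxz, hz, hx]
  omega

variable [Fintype α]

theorem card_le_choose_of_forall_disjoint {𝒜 : Finset (Finset α)} {s : Finset α}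
    (h𝒜 : ∀ a ∈ 𝒜, #a = k ∧ Disjoint a s) : #𝒜 ≤ (Fintype.card α - #s).choose k := by
  have hsub : 𝒜 ⊆ sᶜ.powersetCard k := fun a ha ↦
    mem_powersetCard.2 ⟨subset_compl_iff_disjoint_right.2 (h𝒜 a ha).2, (h𝒜 a ha).1⟩
  simpa [card_compl] using card_le_card hsub

theorem card_le_choose_of_forall_disjoint_of_card_eq
    {A : Finset {s : Finset α // #s = k}} (y : {s : Finset α // #s = k})
    (hA : ∀ x ∈ A, Disjoint x.1 y.1) :
    #A ≤ (Fintype.card α - k).choose k := by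
  have h := card_le_choose_of_forall_disjoint (𝒜 := A.map (Function.Embedding.subtype _))
    (s := y.1) fun a ha ↦ by
      obtain ⟨x, hx, rfl⟩ := mem_map.1 ha
      exact ⟨x.2, hA x hx⟩
  rwa [card_map, y.2] at h

theorem card_mul_card_le_of_forall_disjoint {A B : Finset {s : Finset α // #s = k}}
    (hAB : ∀ x ∈ A, ∀ y ∈ B, Disjoint x.1 y.1) :
    #A * #B ≤ (Fintype.card α - k).choose k ^ 2 := by
  obtain rfl | ⟨x, hx⟩ := A.eq_empty_or_nonempty
  · simp
  obtain rfl | ⟨y, hy⟩ := B.eq_empty_or_nonempty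
  · simp
  rw [sq]
  exact Nat.mul_le_mul
    (card_le_choose_of_forall_disjoint_of_card_eq y fun x' hx' ↦ hAB x' hx' y hy)
    (card_le_choose_of_forall_disjoint_of_card_eq x fun y' hy' ↦ (hAB x hx y' hy').symm)

theorem choose_le_sum_card_mul_card_of_forall_exists_mem {ι : Type*} [Fintype ι]
    (C : ι → Finset {s : Finset α // #s = k} × Finset {s : Finset α // #s = k})
    (hcov : ∀ x y : {s : Finset α // #s = k}, Disjoint x.1 y.1 →
      ∃ i, x ∈ (C i).1 ∧ y ∈ (C i).2) :
    (Fintype.card α).choose (2 * k) ≤ ∑ i, #(C i).1 * #(C i).2 := by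
  have hsurj : Set.SurjOn
      (fun p : {s : Finset α // #s = k} × {s : Finset α // #s = k} ↦ p.1.1 ∪ p.2.1)
      (univ.biUnion fun i ↦ (C i).1 ×ˢ (C i).2 : Finset _)
      (univ.powersetCard (2 * k) : Finset (Finset α)) := by
    intro z hz
    obtain ⟨x, y, hxy, rfl⟩ :=
      exists_disjoint_union_eq_of_card_eq_two_mul (mem_powersetCard.1 hz).2
    obtain ⟨i, hx, hy⟩ := hcov x y hxy
    exact ⟨(x, y), mem_biUnion.2 ⟨i, mem_univ i, mem_product.2 ⟨hx, hy⟩⟩, rfl⟩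
  calc (Fintype.card α).choose (2 * k)
        = #(univ.powersetCard (2 * k) : Finset (Finset α)) := by
        rw [card_powersetCard, card_univ]
    _ ≤ #(univ.biUnion fun i ↦ (C i).1 ×ˢ (C i).2) := card_le_card_of_surjOn _ hsurj
    _ ≤ ∑ i, #((C i).1 ×ˢ (C i).2) := card_biUnion_le
    _ = ∑ i, #(C i).1 * #(C i).2 := by simp only [card_product]

theorem choose_le_card_mul_choose_sq_of_biclique_cover {ι : Type*} [Fintype ι]
    (C : ι → Finset {s : Finset α // #s = k} × Finset {s : Finset α // #s = k})
    (hbic : ∀ i, ∀ x ∈ (C i).1, ∀ y ∈ (C i).2, Disjoint x.1 y.1)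
    (hcov : ∀ x y : {s : Finset α // #s = k}, Disjoint x.1 y.1 →
      ∃ i, x ∈ (C i).1 ∧ y ∈ (C i).2) :
    (Fintype.card α).choose (2 * k) ≤ Fintype.card ι * (Fintype.card α - k).choose k ^ 2 :=
  calc (Fintype.card α).choose (2 * k) ≤ ∑ i, #(C i).1 * #(C i).2 :=
        choose_le_sum_card_mul_card_of_forall_exists_mem C hcov
    _ ≤ ∑ _i : ι, (Fintype.card α - k).choose k ^ 2 :=
        sum_le_sum fun i _ ↦ card_mul_card_le_of_forall_disjoint (hbic i)
    _ = Fintype.card ι * (Fintype.card α - k).choose k ^ 2 := by simp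

end DisjointnessGraph

theorem stmt_18_general (n k : ℕ) (t : ℕ)
    (C : Fin t → Finset (kSubsets n k) × Finset (kSubsets n k))
    (hbic : ∀ i, ∀ x ∈ (C i).1, ∀ y ∈ (C i).2, Disjoint x.1 y.1)
    (hcov : ∀ x y : kSubsets n k, Disjoint x.1 y.1 →
      ∃ i, x ∈ (C i).1 ∧ y ∈ (C i).2) :
    (n.choose (2 * k) : ℝ) / ((n - k).choose k : ℝ) ^ 2 ≤ (t : ℝ) ^ 2 := by
  have hcount : n.choose (2 * k) ≤ t ^ 2 * (n - k).choose k ^ 2 := by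
    have h := choose_le_card_mul_choose_sq_of_biclique_cover C hbic hcov
    simp only [Fintype.card_fin] at h
    exact h.trans (Nat.mul_le_mul_right _ (Nat.le_self_pow two_ne_zero t))
  exact div_le_of_le_mul₀ (by positivity) (by positivity) (by exact_mod_cast hcount)

/-- If the edges of the bipartite graph `G_{n,k}` (both sides are `k`-element subsets of
`{1,…,n}`, edges are the disjoint pairs) are covered by `t` bicliques, then
`t² ≥ C(n,2k) / C(n-k,k)²`. -/
theorem stmt_18 (n k : ℕ) (hk : 0 < k) (hkn : 2 * k ≤ n) (t : ℕ)
    (C : Fin t → Finset (kSubsets n k) × Finset (kSubsets n k))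
    (hbic : ∀ i, ∀ x ∈ (C i).1, ∀ y ∈ (C i).2, Disjoint x.1 y.1)
    (hcov : ∀ x y : kSubsets n k, Disjoint x.1 y.1 →
      ∃ i, x ∈ (C i).1 ∧ y ∈ (C i).2) :
    (n.choose (2 * k) : ℝ) / ((n - k).choose k : ℝ) ^ 2 ≤ (t : ℝ) ^ 2 :=
  stmt_18_general n k t C hbic hcov
end

section
/- Let n, k be positive integers with 2k ≤ n, and let G_{n,k} be the bipartite graph whose left and right vertex sets are both the collection of k-element subsets of {1, …, n}, with an edge between x and y exactly when x and y are disjoint. Then the biclique covering number satisfies bcc(G_{n,k}) ≥ C(2k, k). In particular, every biclique of G_{n,k} contains at most one edge (x,y) with any given union x ∪ y = a. -/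
/-!
Fix a `2k`-set `a`. The `C(2k,k)` edges `(s, a \ s)` with `s ⊆ a`, `#s = k`, form a fooling set:
if `(x, y)` and `(x', y')` lie in one biclique, then also `x ∩ y' = ∅` and `x' ∩ y = ∅`, and
together with `x ∪ y = x' ∪ y'` this forces `x = x'` and `y = y'`. A biclique cover must
therefore use a different biclique for each of these edges.
-/

open Finset

theorem eq_and_eq_of_sup_eq_of_disjoint {α : Type*} [DistribLattice α] [OrderBot α]
    {x y x' y' : α} (hu : x ⊔ y = x' ⊔ y') (hxy' : Disjoint x y') (hx'y : Disjoint x' y) :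
    x = x' ∧ y = y' :=
  ⟨le_antisymm (hxy'.left_le_of_le_sup_right (hu ▸ le_sup_left))
      (hx'y.left_le_of_le_sup_right (hu ▸ le_sup_left)),
    le_antisymm (hx'y.symm.left_le_of_le_sup_left (hu ▸ le_sup_right))
      (hxy'.symm.left_le_of_le_sup_left (hu ▸ le_sup_right))⟩

theorem card_le_card_of_isFoolingSet {ι κ α β : Type*} [Fintype ι] [Fintype κ]
    (E : α → β → Prop) (C : ι → Finset α × Finset β)
    (hC : ∀ i, ∀ x ∈ (C i).1, ∀ y ∈ (C i).2, E x y) (u : κ → α) (v : κ → β)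
    (hcov : ∀ j, ∃ i, u j ∈ (C i).1 ∧ v j ∈ (C i).2)
    (hfool : ∀ j j', E (u j) (v j') → E (u j') (v j) → j = j') :
    Fintype.card κ ≤ Fintype.card ι := by
  choose f hf using hcov
  refine Fintype.card_le_of_injective f fun j j' hjj' => hfool j j' ?_ ?_
  · exact hC _ _ (hf j).1 _ (hjj' ▸ (hf j').2)
  · exact hC _ _ (hf j').1 _ (hjj' ▸ (hf j).2)

theorem card_sdiff_of_mem_powersetCard {α : Type*} [DecidableEq α] {a s : Finset α} {k : ℕ}
    (ha : #a = 2 * k) (hs : s ∈ a.powersetCard k) : #(a \ s) = k := by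
  obtain ⟨hsa, hsk⟩ := mem_powersetCard.1 hs
  rw [card_sdiff_of_subset hsa, ha, hsk]
  omega

theorem stmt_19_general (n k : ℕ) (hkn : 2 * k ≤ n) :
    (∀ (t : ℕ) (C : Fin t → Finset (kSubsets n k) × Finset (kSubsets n k)),
      (∀ i, ∀ x ∈ (C i).1, ∀ y ∈ (C i).2, Disjoint x.1 y.1) →
      (∀ x y : kSubsets n k, Disjoint x.1 y.1 →
        ∃ i, x ∈ (C i).1 ∧ y ∈ (C i).2) →
      (2 * k).choose k ≤ t) ∧
    (∀ S₁ S₂ : Finset (kSubsets n k),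
      (∀ x ∈ S₁, ∀ y ∈ S₂, Disjoint x.1 y.1) →
      ∀ x ∈ S₁, ∀ y ∈ S₂, ∀ x' ∈ S₁, ∀ y' ∈ S₂,
        x.1 ∪ y.1 = x'.1 ∪ y'.1 → x = x' ∧ y = y') := by
  refine ⟨fun t C hC hcov => ?_, fun S₁ S₂ hS x hx y hy x' hx' y' hy' hu => ?_⟩
  · obtain ⟨a, -, ha⟩ := exists_subset_card_eq (s := (univ : Finset (Fin n))) (n := 2 * k)
      (by simpa using hkn)
    let u : a.powersetCard k → kSubsets n k := fun s => ⟨s, (mem_powersetCard.1 s.2).2⟩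
    let v : a.powersetCard k → kSubsets n k := fun s =>
      ⟨a \ s, card_sdiff_of_mem_powersetCard ha s.2⟩
    have hunion (s : a.powersetCard k) : (u s).1 ∪ (v s).1 = a :=
      union_sdiff_of_subset (mem_powersetCard.1 s.2).1
    have hbound := card_le_card_of_isFoolingSet (fun x y => Disjoint x.1 y.1) C hC u v
      (fun s => hcov _ _ disjoint_sdiff)
      (fun s s' h h' => Subtype.ext <|
        (eq_and_eq_of_sup_eq_of_disjoint ((hunion s).trans (hunion s').symm) h h').1)
    rwa [Fintype.card_coe, card_powersetCard, ha, Fintype.card_fin] at hbound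
  · obtain ⟨hxx', hyy'⟩ := eq_and_eq_of_sup_eq_of_disjoint hu (hS x hx y' hy') (hS x' hx' y hy)
    exact ⟨Subtype.ext hxx', Subtype.ext hyy'⟩

/-- The biclique covering number of the disjointness graph `G_{n,k}` is at least
`C(2k,k)`: every covering of the edges (disjoint pairs) by `t` bicliques has
`t ≥ C(2k,k)`. In particular, every biclique of `G_{n,k}` contains at most one edge
`(x,y)` with any given union `x ∪ y`. -/
theorem stmt_19 (n k : ℕ) (hk : 0 < k) (hkn : 2 * k ≤ n) :
    (∀ (t : ℕ) (C : Fin t → Finset (kSubsets n k) × Finset (kSubsets n k)),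
      (∀ i, ∀ x ∈ (C i).1, ∀ y ∈ (C i).2, Disjoint x.1 y.1) →
      (∀ x y : kSubsets n k, Disjoint x.1 y.1 →
        ∃ i, x ∈ (C i).1 ∧ y ∈ (C i).2) →
      (2 * k).choose k ≤ t) ∧
    (∀ S₁ S₂ : Finset (kSubsets n k),
      (∀ x ∈ S₁, ∀ y ∈ S₂, Disjoint x.1 y.1) →
      ∀ x ∈ S₁, ∀ y ∈ S₂, ∀ x' ∈ S₁, ∀ y' ∈ S₂,
        x.1 ∪ y.1 = x'.1 ∪ y'.1 → x = x' ∧ y = y') :=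
  stmt_19_general n k hkn
end
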